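/- For all positive integers $n$ and $r$, the polynomial $[n]^2 \binom{2n}{n}_q$ divides $\sum_{k=1}^{n} [2k][k]^{2r} q^{(r+1)(n-k)} \binom{2n}{n+k}_q$ in the polynomial ring $\mathbb{Z}[q]$. -/

import Mathlib

/-! Write `S r n` for the sum and `T r n k` for its summands. The identities
`[n]^2 = q^(n-k) [k]^2 + [n+k][n-k]` and `[n+k][n-k] C(2n, n+k) = [2n][2n-1] C(2n-2, n-1+k)` give,
summand by summand, the recurrence `S (r+1) n = [n]^2 S r n - q^(r+1) [2n][2n-1] S r (n-1)`.
By absorption `S 0 n` telescopes to `[n] C(2n, n)`, and with `[n] = 1 + q [n-1]` the recurrence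
gives `S 1 n = [n]^2 C(2n, n)`. Induction on `r` then concludes, since
`[2n][2n-1] C(2n-2, n-1) = [n]^2 C(2n, n)`. -/

open Polynomial Finset

/-- The `q`-integer `[n] = 1 + q + ⋯ + q^(n-1)` as a polynomial in `ℤ[q]`. -/
noncomputable def qint (n : ℕ) : Polynomial ℤ := ∑ i ∈ Finset.range n, Polynomial.X ^ i

/-- The Gaussian binomial coefficient `[n choose k]_q` in `ℤ[q]`, via the `q`-Pascal rule. -/
noncomputable def qbinom : ℕ → ℕ → Polynomial ℤ
  | _, 0 => 1
  | 0, _ + 1 => 0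
  | n + 1, k + 1 => qbinom n k + Polynomial.X ^ (k + 1) * qbinom n (k + 1)

@[simp] lemma qint_zero : qint 0 = 0 := by simp [qint]

lemma qint_add (a b : ℕ) : qint (a + b) = qint a + X ^ a * qint b := by
  simp [qint, sum_range_add, mul_sum, pow_add]

lemma qint_succ (n : ℕ) : qint (n + 1) = 1 + X * qint n := by
  simpa [qint, add_comm 1 n] using qint_add 1 n

lemma qint_ne_zero {n : ℕ} (hn : n ≠ 0) : qint n ≠ 0 := fun h => by
  simpa [qint, hn] using congrArg (eval 1) h

lemma qint_add_sq (k d : ℕ) :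
    qint (k + d) ^ 2 = X ^ d * qint k ^ 2 + qint (2 * k + d) * qint d := by
  have hkd := qint_add k d
  have hdk := qint_add d k
  have h := qint_add (d + k) k
  rw [show d + k + k = 2 * k + d by ring, pow_add, add_comm d k] at h
  rw [add_comm d k] at hdk
  linear_combination qint (k + d) * hdk + X ^ d * qint k * hkd - qint d * h

noncomputable def qfact : ℕ → Polynomial ℤ
  | 0 => 1
  | n + 1 => qfact n * qint (n + 1)

lemma qfact_succ (n : ℕ) : qfact (n + 1) = qfact n * qint (n + 1) := rfl

lemma qfact_ne_zero (n : ℕ) : qfact n ≠ 0 := by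
  induction n with
  | zero => exact one_ne_zero
  | succ n ih => exact mul_ne_zero ih (qint_ne_zero n.succ_ne_zero)

lemma qbinom_succ_succ (n k : ℕ) :
    qbinom (n + 1) (k + 1) = qbinom n k + X ^ (k + 1) * qbinom n (k + 1) := rfl

lemma qbinom_eq_zero_of_lt : ∀ {n k : ℕ}, n < k → qbinom n k = 0
  | 0, _ + 1, _ => rfl
  | _ + 1, _ + 1, h => by
    rw [qbinom_succ_succ, qbinom_eq_zero_of_lt (by omega), qbinom_eq_zero_of_lt (by omega),
      mul_zero, add_zero]

lemma qbinom_self : ∀ n : ℕ, qbinom n n = 1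
  | 0 => rfl
  | n + 1 => by rw [qbinom_succ_succ, qbinom_self n, qbinom_eq_zero_of_lt n.lt_succ_self]; ring

lemma qbinom_add_mul_qfact : ∀ a b : ℕ, qbinom (a + b) a * (qfact a * qfact b) = qfact (a + b)
  | 0, b => by simp [qbinom, qfact]
  | a + 1, 0 => by simp [qbinom_self, qfact]
  | a + 1, b + 1 => by
    have h1 := qbinom_add_mul_qfact a (b + 1)
    have h2 := qbinom_add_mul_qfact (a + 1) b
    rw [show a + (b + 1) = a + b + 1 by ring, qfact_succ b] at h1
    rw [show a + 1 + b = a + b + 1 by ring, qfact_succ a] at h2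
    have hq := qint_add (a + 1) (b + 1)
    rw [show a + 1 + (b + 1) = a + b + 1 + 1 by ring] at hq ⊢
    rw [qbinom_succ_succ, qfact_succ a, qfact_succ b, qfact_succ (a + b + 1)]
    linear_combination qint (a + 1) * h1 + X ^ (a + 1) * qint (b + 1) * h2 - qfact (a + b + 1) * hq

lemma qint_succ_mul_qbinom (a b : ℕ) :
    qint (a + 1) * qbinom (a + b + 1) (a + 1) = qint (b + 1) * qbinom (a + b + 1) a := by
  refine mul_right_cancel₀ (mul_ne_zero (qfact_ne_zero a) (qfact_ne_zero b)) ?_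
  have h1 := qbinom_add_mul_qfact (a + 1) b
  have h2 := qbinom_add_mul_qfact a (b + 1)
  rw [qfact_succ, show a + 1 + b = a + b + 1 by ring] at h1
  rw [qfact_succ, show a + (b + 1) = a + b + 1 by ring] at h2
  linear_combination h1 - h2

lemma qint_mul_qint_mul_qbinom (a b : ℕ) :
    qint (a + 1) * qint (b + 1) * qbinom (a + b + 2) (a + 1) =
      qint (a + b + 2) * qint (a + b + 1) * qbinom (a + b) a := by
  refine mul_right_cancel₀ (mul_ne_zero (qfact_ne_zero a) (qfact_ne_zero b)) ?_
  have h1 := qbinom_add_mul_qfact (a + 1) (b + 1)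
  have h2 := qbinom_add_mul_qfact a b
  rw [qfact_succ a, qfact_succ b, show a + 1 + (b + 1) = a + b + 1 + 1 by ring, qfact_succ,
    qfact_succ] at h1
  linear_combination h1 - qint (a + b + 2) * qint (a + b + 1) * h2

lemma qint_mul_qint_mul_qbinom_central (n : ℕ) :
    qint (2 * n + 2) * qint (2 * n + 1) * qbinom (2 * n) n =
      qint (n + 1) ^ 2 * qbinom (2 * (n + 1)) (n + 1) := by
  have h := qint_mul_qint_mul_qbinom n n
  rw [show n + n + 2 = 2 * (n + 1) by ring, show n + n + 1 = 2 * n + 1 by ring,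
    show n + n = 2 * n by ring, mul_add_one 2 n] at h
  linear_combination -h

noncomputable def qBinomTerm (r n k : ℕ) : ℤ[X] :=
  qint (2 * k) * qint k ^ (2 * r) * X ^ ((r + 1) * (n - k)) * qbinom (2 * n) (n + k)

noncomputable def qBinomSum (r n : ℕ) : ℤ[X] :=
  ∑ k ∈ Icc 1 n, qBinomTerm r n k

lemma qBinomTerm_eq_zero_of_lt {r n k : ℕ} (h : n < k) : qBinomTerm r n k = 0 := by
  rw [qBinomTerm, qbinom_eq_zero_of_lt (by omega), mul_zero]

@[simp] lemma qBinomSum_zero_right (r : ℕ) : qBinomSum r 0 = 0 := by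
  simp [qBinomSum]

lemma qBinomTerm_zero_left {n k : ℕ} (hk : k ∈ Icc 1 n) :
    qBinomTerm 0 n k =
      qint (n + 1 - k) * qbinom (2 * n) (n + k - 1) - qint (n - k) * qbinom (2 * n) (n + k) := by
  obtain ⟨hk1, hkn⟩ := mem_Icc.mp hk
  obtain ⟨j, rfl⟩ := Nat.exists_eq_add_of_le' hk1
  obtain ⟨d, rfl⟩ := Nat.exists_eq_add_of_le hkn
  have habs := qint_succ_mul_qbinom (2 * j + d + 1) d
  have hsplit := qint_add d (2 * (j + 1))
  rw [show 2 * j + d + 1 + d + 1 = 2 * (j + 1 + d) by ring,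
    show 2 * j + d + 1 + 1 = j + 1 + d + (j + 1) by ring] at habs
  rw [show d + 2 * (j + 1) = j + 1 + d + (j + 1) by ring] at hsplit
  rw [qBinomTerm, show j + 1 + d + 1 - (j + 1) = d + 1 by omega,
    show j + 1 + d + (j + 1) - 1 = 2 * j + d + 1 by omega, show j + 1 + d - (j + 1) = d by omega]
  linear_combination habs - qbinom (2 * (j + 1 + d)) (j + 1 + d + (j + 1)) * hsplit

lemma qBinomSum_zero_left (n : ℕ) : qBinomSum 0 n = qint n * qbinom (2 * n) n := by
  rcases Nat.eq_zero_or_pos n with rfl | hn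
  · simp
  set g : ℕ → ℤ[X] := fun j => -(qint (n + 1 - j) * qbinom (2 * n) (n + j - 1))
  have hterm : ∀ k ∈ Icc 1 n, qBinomTerm 0 n k = g (k + 1) - g k := fun k hk => by
    simp only [qBinomTerm_zero_left hk, g]
    rw [show n + 1 - (k + 1) = n - k by omega,
      show n + (k + 1) - 1 = n + k by omega]
    ring
  rw [qBinomSum, sum_congr rfl hterm, sum_Icc_sub hn]
  simp [g]

lemma qBinomTerm_succ {r n k : ℕ} (hk : k ≤ n + 1) :
    qBinomTerm (r + 1) (n + 1) k =
      qint (n + 1) ^ 2 * qBinomTerm r (n + 1) k -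
        X ^ (r + 1) * (qint (2 * n + 2) * qint (2 * n + 1)) * qBinomTerm r n k := by
  rcases Nat.lt_or_ge n k with hnk | hkn
  · obtain rfl : k = n + 1 := by omega
    rw [qBinomTerm_eq_zero_of_lt hnk, mul_zero, sub_zero]
    simp only [qBinomTerm, tsub_self, mul_zero, pow_zero, mul_one]
    ring
  obtain ⟨d, rfl⟩ := Nat.exists_eq_add_of_le hkn
  have hsq := qint_add_sq k (d + 1)
  have hred := qint_mul_qint_mul_qbinom (2 * k + d) d
  rw [show k + (d + 1) = k + d + 1 by ring, show 2 * k + (d + 1) = 2 * k + d + 1 by ring] at hsq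
  rw [show 2 * k + d + d + 2 = 2 * (k + d) + 2 by ring,
    show 2 * k + d + d + 1 = 2 * (k + d) + 1 by ring,
    show 2 * k + d + d = 2 * (k + d) by ring] at hred
  simp only [qBinomTerm]
  rw [show k + d + 1 - k = d + 1 by omega, show k + d - k = d by omega,
    show 2 * (k + d + 1) = 2 * (k + d) + 2 by ring, show k + d + 1 + k = 2 * k + d + 1 by ring,
    show k + d + k = 2 * k + d by ring]
  linear_combination
    -(qint (2 * k) * qint k ^ (2 * r) * X ^ ((r + 1) * (d + 1)) *
      qbinom (2 * (k + d) + 2) (2 * k + d + 1)) * hsq -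
    qint (2 * k) * qint k ^ (2 * r) * X ^ ((r + 1) * (d + 1)) * hred

lemma qBinomSum_succ (r n : ℕ) :
    qBinomSum (r + 1) (n + 1) =
      qint (n + 1) ^ 2 * qBinomSum r (n + 1) -
        X ^ (r + 1) * (qint (2 * n + 2) * qint (2 * n + 1)) * qBinomSum r n := by
  have hext : qBinomSum r n = ∑ k ∈ Icc 1 (n + 1), qBinomTerm r n k := by
    rw [sum_Icc_succ_top (by omega), qBinomTerm_eq_zero_of_lt n.lt_succ_self, add_zero, qBinomSum]
  rw [hext, qBinomSum, qBinomSum, mul_sum, mul_sum, ← sum_sub_distrib]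
  exact sum_congr rfl fun k hk => qBinomTerm_succ (mem_Icc.mp hk).2

lemma qBinomSum_one (n : ℕ) : qBinomSum 1 n = qint n ^ 2 * qbinom (2 * n) n := by
  cases n with
  | zero => simp
  | succ n =>
    rw [qBinomSum_succ, qBinomSum_zero_left, qBinomSum_zero_left]
    linear_combination qint (n + 1) ^ 2 * qbinom (2 * (n + 1)) (n + 1) * qint_succ n -
      X * qint n * qint_mul_qint_mul_qbinom_central n

theorem qint_sq_mul_qbinom_dvd_qBinomSum {r : ℕ} (hr : 0 < r) (n : ℕ) :
    qint n ^ 2 * qbinom (2 * n) n ∣ qBinomSum r n := by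
  induction r, hr using Nat.le_induction generalizing n with
  | base => rw [qBinomSum_one]
  | succ r _ ih =>
    cases n with
    | zero => simp
    | succ n =>
      have hdvd : qbinom (2 * n) n ∣ qBinomSum r n := dvd_of_mul_left_dvd (ih n)
      rw [qBinomSum_succ]
      refine dvd_sub ((ih (n + 1)).mul_left _) ?_
      rw [← qint_mul_qint_mul_qbinom_central, mul_assoc (X ^ (r + 1))]
      exact dvd_mul_of_dvd_right (mul_dvd_mul_left _ hdvd) _

theorem stmt_4_general (n r : ℕ) (hr : 0 < r) :
    (qint n) ^ 2 * qbinom (2 * n) n ∣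
      ∑ k ∈ Finset.Icc 1 n,
        qint (2 * k) * (qint k) ^ (2 * r) * Polynomial.X ^ ((r + 1) * (n - k)) *
          qbinom (2 * n) (n + k) :=
  qint_sq_mul_qbinom_dvd_qBinomSum hr n

theorem stmt_4 (n r : ℕ) (hn : 0 < n) (hr : 0 < r) :
    (qint n) ^ 2 * qbinom (2 * n) n ∣
      ∑ k ∈ Finset.Icc 1 n,
        qint (2 * k) * (qint k) ^ (2 * r) * Polynomial.X ^ ((r + 1) * (n - k)) *
          qbinom (2 * n) (n + k) :=
  stmt_4_general n r hr
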